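/- arXiv:1406.0134 — 10 statements merged into one kernel-verified Lean document; each statement's English description precedes it below -/
import Mathlib

section
/- (Theorem 3.2, Yablo's paradox in LTL.) The formula ¬□(φ ↔ ○□¬φ) is valid in linear temporal logic. Semantically: there is no function f : ℕ → Prop and no n : ℕ such that for every i ≥ n, f i holds if and only if f j fails for every j > i. -/
theorem yablo_ltl_always :
    ¬ ∃ (f : ℕ → Prop) (n : ℕ), ∀ i ≥ n, (f i ↔ ∀ j > i, ¬ f j) := by
  rintro ⟨f, n, h⟩
  have key : ∀ i ≥ n, ¬ f i := by
    intro i hi hfi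
    have hall := (h i hi).mp hfi
    exact hall (i+1) (by omega)
      ((h (i+1) (by omega)).mpr (fun j hj => hall j (by omega)))
  exact key n le_rfl ((h n le_rfl).mpr (fun j hj => key j (by omega)))
end

section
/- (Proposition 3.4, first part.) The operator x ↦ ¬□x has no fixed point in LTL: the formula ¬□(φ ↔ ¬□φ) is valid. Semantically: there is no function f : ℕ → Prop and no n : ℕ such that for every i ≥ n, f i holds if and only if it is not the case that f j holds for every j ≥ i. -/
theorem no_fixed_point_not_box :
    ¬ ∃ (f : ℕ → Prop) (n : ℕ), ∀ i ≥ n, (f i ↔ ¬ ∀ j ≥ i, f j) := by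
  rintro ⟨f, n, h⟩
  have hall : ∀ j ≥ n, f j := by
    intro j hj
    by_contra hfj
    exact hfj (not_not.mp (fun hn => hfj ((h j hj).mpr hn)) j le_rfl)
  exact (h n le_rfl).mp (hall n le_rfl) hall
end

section
/- (Proposition 3.4, second part.) The operator x ↦ □¬x has no fixed point in LTL: the formula ¬□(φ ↔ □¬φ) is valid. Semantically: there is no function f : ℕ → Prop and no n : ℕ such that for every i ≥ n, f i holds if and only if f j fails for every j ≥ i. -/
theorem no_fixed_point_box_not :
    ¬ ∃ (f : ℕ → Prop) (n : ℕ), ∀ i ≥ n, (f i ↔ ∀ j ≥ i, ¬ f j) := by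
  rintro ⟨f, n, h⟩
  have hfn : ¬ f n := fun hf => ((h n le_rfl).mp hf) n le_rfl hf
  have : ¬ ∀ j ≥ n, ¬ f j := fun hall => hfn ((h n le_rfl).mpr hall)
  push_neg at this
  obtain ⟨j, hj, hfj⟩ := this
  exact ((h j hj).mp hfj) j le_rfl hfj
end

section
/- (Theorem 4.1, the 'sometimes' version of Yablo's paradox in LTL.) The formula ¬□(φ ↔ ○◇¬φ) is valid in linear temporal logic. Semantically: there is no function f : ℕ → Prop and no n : ℕ such that for every i ≥ n, f i holds if and only if there exists j > i with f j failing. -/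
theorem yablo_ltl_sometimes :
    ¬ ∃ (f : ℕ → Prop) (n : ℕ), ∀ i ≥ n, (f i ↔ ∃ j > i, ¬ f j) := by
  rintro ⟨f, n, h⟩
  -- First: no i ≥ n can satisfy f i
  have hno : ∀ i ≥ n, ¬ f i := by
    intro i hi hfi
    obtain ⟨j, hj, hfj⟩ := (h i hi).mp hfi
    -- f j is false, so all k > j satisfy f k
    have hall : ∀ k > j, f k := by
      intro k hk
      by_contra hk'
      exact hfj ((h j (le_trans hi (le_of_lt hj))).mpr ⟨k, hk, hk'⟩)
    have hfj1 : f (j+1) := hall (j+1) (Nat.lt_succ_self j)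
    obtain ⟨m, hm, hfm⟩ := (h (j+1) (by omega)).mp hfj1
    exact hfm (hall m (by omega))
  -- But then f n is false, yet f (n+1) is false gives f n true
  exact hno n le_rfl ((h n le_rfl).mpr ⟨n+1, Nat.lt_succ_self n, hno (n+1) (by omega)⟩)
end

section
/- (Theorem 4.2, the 'almost always' version of Yablo's paradox in LTL.) The formula ¬□(φ ↔ ○◇□¬φ) is valid in linear temporal logic. Semantically: there is no function f : ℕ → Prop and no n : ℕ such that for every i ≥ n, f i holds if and only if there exists j > i such that f k fails for every k ≥ j. -/
theorem yablo_ltl_almost_always :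
    ¬ ∃ (f : ℕ → Prop) (n : ℕ), ∀ i ≥ n, (f i ↔ ∃ j > i, ∀ k ≥ j, ¬ f k) := by
  rintro ⟨f, n, h⟩
  by_cases hex : ∃ i ≥ n, f i
  · obtain ⟨i, hi, hfi⟩ := hex
    obtain ⟨j, hj, hall⟩ := (h i hi).mp hfi
    have hjn : j ≥ n := le_trans hi (le_of_lt hj)
    have hfj : f j := (h j hjn).mpr ⟨j + 1, Nat.lt_succ_self j, fun k hk =>
      hall k (le_trans (Nat.le_succ j) hk)⟩
    exact hall j le_rfl hfj
  · push_neg at hex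
    exact hex n le_rfl ((h n le_rfl).mpr ⟨n + 1, Nat.lt_succ_self n, fun k hk =>
      hex k (le_trans (Nat.le_succ n) hk)⟩)
end

section
/- (Theorem 4.3, the 'infinitely often' version of Yablo's paradox in LTL.) The formula ¬□(φ ↔ ○□◇¬φ) is valid in linear temporal logic. Semantically: there is no function f : ℕ → Prop and no n : ℕ such that for every i ≥ n, f i holds if and only if for every j > i there exists k ≥ j with f k failing. -/
theorem yablo_ltl_infinitely_often :
    ¬ ∃ (f : ℕ → Prop) (n : ℕ), ∀ i ≥ n, (f i ↔ ∀ j > i, ∃ k ≥ j, ¬ f k) := by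
  rintro ⟨f, n, h⟩
  -- First: no i ≥ n satisfies f i
  have hnof : ∀ i ≥ n, ¬ f i := by
    intro i hi hfi
    have hio := (h i hi).mp hfi
    obtain ⟨k, hk, hnfk⟩ := hio (i+1) (Nat.lt_succ_self i)
    have hkn : k ≥ n := le_trans hi (le_trans (Nat.le_succ i) hk)
    -- ¬ f k means ¬ ∀ j > k, ∃ m ≥ j, ¬ f m
    have := (h k hkn).mpr
    have hne : ¬ ∀ j > k, ∃ m ≥ j, ¬ f m := fun hh => hnfk (this hh)
    push_neg at hne
    obtain ⟨j, hj, hall⟩ := hne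
    -- from f i: ∃ m ≥ j, ¬ f m since j > i
    obtain ⟨m, hm, hnfm⟩ := hio j (lt_trans (Nat.lt_of_lt_of_le (Nat.lt_succ_self i) hk) hj)
    exact hnfm (hall m hm)
  -- ¬ f n gives eventually always f, contradiction
  have hne : ¬ ∀ j > n, ∃ m ≥ j, ¬ f m := fun hh => hnof n le_rfl ((h n le_rfl).mpr hh)
  push_neg at hne
  obtain ⟨j, hj, hall⟩ := hne
  exact hnof j (le_of_lt hj) (hall j le_rfl)
end

section
/- There is no sequence of truth values Y : ℕ → Prop such that for every n : ℕ, Y n holds if and only if Y k fails for every k > n. -/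
theorem yablo_paradox :
    ¬ ∃ Y : ℕ → Prop, ∀ n : ℕ, (Y n ↔ ∀ k > n, ¬ Y k) := by
  rintro ⟨Y, h⟩
  have hno : ∀ n, ¬ Y n := by
    intro n hn
    have hall := (h n).mp hn
    exact hall (n+1) (Nat.lt_succ_self n)
      ((h (n+1)).mpr fun k hk => hall k (Nat.lt_of_succ_lt hk))
  exact hno 0 ((h 0).mpr fun k _ => hno k)
end

section
/- (Section 4, paradoxicality of the 'sometimes' Yablo sequence.) There is no sequence of truth values Y : ℕ → Prop such that for every n : ℕ, Y n holds if and only if there exists i > n with Y i failing. -/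
theorem yablo_sometimes_paradox :
    ¬ ∃ Y : ℕ → Prop, ∀ n : ℕ, (Y n ↔ ∃ i > n, ¬ Y i) := by
  rintro ⟨Y, h⟩
  have hnone : ∀ n, ¬ Y n := by
    intro n hn
    obtain ⟨i, hi, hYi⟩ := (h n).mp hn
    have hall : ∀ j > i, Y j := by
      intro j hj
      by_contra hj'
      exact hYi ((h i).mpr ⟨j, hj, hj'⟩)
    obtain ⟨k, hk, hYk⟩ := (h (i+1)).mp (hall (i+1) (Nat.lt_succ_self i))
    exact hYk (hall k (Nat.lt_of_succ_lt hk))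
  exact hnone 0 ((h 0).mpr ⟨1, Nat.zero_lt_one, hnone 1⟩)
end

section
/- (Section 4, paradoxicality of the 'almost always' Yablo sequence.) There is no sequence of truth values Y : ℕ → Prop such that for every n : ℕ, Y n holds if and only if there exists i > n such that Y j fails for every j ≥ i. -/
theorem yablo_almost_always_paradox :
    ¬ ∃ Y : ℕ → Prop, ∀ n : ℕ, (Y n ↔ ∃ i > n, ∀ j ≥ i, ¬ Y j) := by
  rintro ⟨Y, h⟩
  by_cases h0 : ∃ n, Y n
  · obtain ⟨n, hn⟩ := h0
    obtain ⟨i, _, hi⟩ := (h n).mp hn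
    exact hi i le_rfl ((h i).mpr ⟨i + 1, Nat.lt_succ_self i,
      fun j hj => hi j (le_of_lt (Nat.lt_of_succ_le hj))⟩)
  · push_neg at h0
    exact h0 0 ((h 0).mpr ⟨1, Nat.one_pos, fun j _ => h0 j⟩)
end

section
/- (Section 4, paradoxicality of the 'infinitely often' Yablo sequence.) There is no sequence of truth values Y : ℕ → Prop such that for every n : ℕ, Y n holds if and only if for every i > n there exists j ≥ i with Y j failing. -/
theorem yablo_infinitely_often_paradox :
    ¬ ∃ Y : ℕ → Prop, ∀ n : ℕ, (Y n ↔ ∀ i > n, ∃ j ≥ i, ¬ Y j) := by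
  rintro ⟨Y, h⟩
  have all : ∀ n, Y n := by
    intro n
    by_contra hn
    rw [h n] at hn
    push_neg at hn
    obtain ⟨i, hi, htrue⟩ := hn
    have := (h i).mp (htrue i le_rfl)
    obtain ⟨j, hj, hnj⟩ := this (i+1) (Nat.lt_succ_self i)
    exact hnj (htrue j (le_of_lt (lt_of_lt_of_le (Nat.lt_succ_self i) hj)))
  obtain ⟨j, _, hnj⟩ := (h 0).mp (all 0) 1 Nat.zero_lt_one
  exact hnj (all j)
end
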